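/- arXiv:2012.05667 — 5 statements merged into one kernel-verified Lean document; each statement's English description precedes it below -/
import Mathlib

section
/- Let H_b ∈ ℂ^{N_r×N_t} and H_e ∈ ℂ^{N_e×N_t} be complex matrices such that Δ := H_bᴴH_b − H_eᴴH_e is positive semidefinite, and let X ∈ ℂ^{N_t×N_t} be Hermitian positive semidefinite. Then the matrix I + X H_eᴴ H_e is invertible and det(I + H_b X H_bᴴ) / det(I + H_e X H_eᴴ) = det(I + Δ^{1/2} (I + X H_eᴴ H_e)^{-1} X Δ^{1/2}), where Δ^{1/2} is the unique positive semidefinite square root of Δ. (In particular both sides are positive reals.) -/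
open Matrix
open scoped ComplexOrder

/-- The square root of a positive semidefinite matrix, as defined in the older Mathlib
(removed since in favour of `CFC.sqrt`). -/
noncomputable def Matrix.PosSemidef.sqrt {n 𝕜 : Type*} [Fintype n] [RCLike 𝕜] [DecidableEq n]
    {A : Matrix n n 𝕜} (hA : A.PosSemidef) : Matrix n n 𝕜 :=
  hA.1.eigenvectorUnitary.1 * diagonal ((↑) ∘ (√·) ∘ hA.1.eigenvalues) *
  (star hA.1.eigenvectorUnitary : Matrix n n 𝕜)

/-!
By Sylvester's identity `det (1 + H X Hᴴ) = det (1 + X Hᴴ H)`. Put `M = 1 + X Heᴴ He`; its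
determinant is `det (1 + He X Heᴴ) > 0`, so `M` is invertible, and
`1 + X Hbᴴ Hb = M + X Δ = M (1 + M⁻¹ X Δ^{1/2} Δ^{1/2})`. Taking determinants and moving one
factor `Δ^{1/2}` to the front with Sylvester's identity once more gives the quotient formula.
-/

namespace Matrix

section SquareRoot

variable {n 𝕜 : Type*} [Fintype n] [RCLike 𝕜] [DecidableEq n] {A : Matrix n n 𝕜}

open scoped MatrixOrder

theorem PosSemidef.sqrt_eq_cfcSqrt (hA : A.PosSemidef) : hA.sqrt = CFC.sqrt A := by
  rw [CFC.sqrt_eq_real_sqrt A hA.nonneg, cfcₙ_eq_cfc, hA.1.cfc_eq]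
  rfl

theorem PosSemidef.sqrt_mul_sqrt_self (hA : A.PosSemidef) : hA.sqrt * hA.sqrt = A := by
  rw [hA.sqrt_eq_cfcSqrt, CFC.sqrt_mul_sqrt_self A hA.nonneg]

end SquareRoot

section Determinant

variable {n m R : Type*} [Fintype n] [Fintype m] [DecidableEq n] [DecidableEq m] [CommRing R]

theorem det_one_add_mul_mul_comm (X : Matrix n n R) (K : Matrix n m R) (H : Matrix m n R) :
    det (1 + X * K * H) = det (1 + H * X * K) := by
  rw [det_one_add_mul_comm (X * K) H, Matrix.mul_assoc]

theorem det_one_add_mul_eq_det_mul_det_of_mul_self_eq_sub (X A B S : Matrix n n R)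
    (hS : S * S = A - B) (hB : IsUnit (1 + X * B).det) :
    det (1 + X * A) = det (1 + X * B) * det (1 + S * (1 + X * B)⁻¹ * X * S) := by
  set M := 1 + X * B with hM
  have hfactor : 1 + X * A = M * (1 + M⁻¹ * X * S * S) := by
    rw [mul_add, mul_one, Matrix.mul_assoc, Matrix.mul_assoc, ← Matrix.mul_assoc M,
      mul_nonsing_inv M hB, Matrix.one_mul, hS, hM, Matrix.mul_sub]
    abel
  rw [hfactor, det_mul, det_one_add_mul_comm (M⁻¹ * X * S) S]
  simp only [Matrix.mul_assoc]

end Determinant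

theorem PosSemidef.posDef_one_add_mul_mul_conjTranspose {n m 𝕜 : Type*} [Fintype n] [Fintype m]
    [DecidableEq m] [RCLike 𝕜] {X : Matrix n n 𝕜} (hX : X.PosSemidef) (H : Matrix m n 𝕜) :
    (1 + H * X * Hᴴ).PosDef :=
  PosDef.one.add_posSemidef (hX.mul_mul_conjTranspose_same H)

end Matrix

/-- determinant identity for the degraded MIMO wiretap channel
(equation (37) of the paper). -/
theorem stmt_0 {Nr Nt Ne : ℕ}
    (Hb : Matrix (Fin Nr) (Fin Nt) ℂ) (He : Matrix (Fin Ne) (Fin Nt) ℂ)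
    (X : Matrix (Fin Nt) (Fin Nt) ℂ) (hX : X.PosSemidef)
    (hΔ : (Hbᴴ * Hb - Heᴴ * He).PosSemidef) :
    IsUnit (1 + X * Heᴴ * He) ∧
    (1 + Hb * X * Hbᴴ).det / (1 + He * X * Heᴴ).det
      = (1 + hΔ.sqrt * (1 + X * Heᴴ * He)⁻¹ * X * hΔ.sqrt).det ∧
    0 < (1 + Hb * X * Hbᴴ).det / (1 + He * X * Heᴴ).det ∧
    0 < (1 + hΔ.sqrt * (1 + X * Heᴴ * He)⁻¹ * X * hΔ.sqrt).det := by
  have hdet_b : 0 < (1 + Hb * X * Hbᴴ).det := (hX.posDef_one_add_mul_mul_conjTranspose Hb).det_pos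
  have hdet_e : 0 < (1 + He * X * Heᴴ).det := (hX.posDef_one_add_mul_mul_conjTranspose He).det_pos
  have hdet_M : 0 < (1 + X * Heᴴ * He).det := by rwa [det_one_add_mul_mul_comm]
  have hunit_M : IsUnit (1 + X * (Heᴴ * He)).det := by
    rw [← Matrix.mul_assoc]; exact hdet_M.ne'.isUnit
  have hquot : (1 + Hb * X * Hbᴴ).det / (1 + He * X * Heᴴ).det
      = (1 + hΔ.sqrt * (1 + X * Heᴴ * He)⁻¹ * X * hΔ.sqrt).det := by
    rw [← det_one_add_mul_mul_comm X Hbᴴ, ← det_one_add_mul_mul_comm X Heᴴ,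
      Matrix.mul_assoc X Hbᴴ, Matrix.mul_assoc X Heᴴ,
      det_one_add_mul_eq_det_mul_det_of_mul_self_eq_sub X _ _ _ hΔ.sqrt_mul_sqrt_self hunit_M,
      mul_div_cancel_left₀ _ hunit_M.ne_zero]
  exact ⟨(isUnit_iff_isUnit_det _).2 hdet_M.ne'.isUnit, hquot, div_pos hdet_b hdet_e,
    hquot ▸ div_pos hdet_b hdet_e⟩
end

section
/- Let H_b ∈ ℂ^{N_r×N_t} and H_e ∈ ℂ^{N_e×N_t} be complex matrices and let V, X* ∈ ℂ^{N_t×N_t} be Hermitian positive semidefinite. Set Γ := H_eᴴ (I + H_e V H_eᴴ)^{-1} H_e. If ln det(I + H_b X* H_bᴴ) − Re tr(Γ X*) ≥ ln det(I + H_b V H_bᴴ) − Re tr(Γ V), then ln det(I + H_b X* H_bᴴ) − ln det(I + H_e X* H_eᴴ) ≥ ln det(I + H_b V H_bᴴ) − ln det(I + H_e V H_eᴴ), i.e., C_s(X*) ≥ C_s(V). -/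
open Matrix
open scoped ComplexOrder

/-!
`log det` is concave on positive definite matrices, so it lies below its tangent:
`log det B ≤ log det A + tr (A⁻¹ (B - A))`. Conjugating by `A^{-1/2}` reduces this to
`log det M ≤ tr M - n`, i.e. `∑ log λᵢ ≤ ∑ (λᵢ - 1)` over the eigenvalues of `M`.
With `A = I + H_e V H_eᴴ`, `B = I + H_e X* H_eᴴ` and `tr (A⁻¹ H_e X H_eᴴ) = tr (Γ X)`, the
eavesdropper's rate grows by at most `Re tr (Γ (X* - V))`, which by hypothesis is at most
the growth of the legitimate rate.
-/

namespace Matrix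

lemma trace_mul_mul_mul_cycle {R m n : Type*} [CommSemiring R] [Fintype m] [Fintype n]
    (C : Matrix m m R) (H : Matrix m n R) (X : Matrix n n R) (K : Matrix n m R) :
    (C * (H * X * K)).trace = (K * C * H * X).trace := by
  rw [← Matrix.mul_assoc, trace_mul_comm]
  simp only [Matrix.mul_assoc]

variable {𝕜 : Type*} [RCLike 𝕜] {n : Type*} [Fintype n] [DecidableEq n]

lemma PosDef.log_re_det_le_re_trace_sub_card {M : Matrix n n 𝕜} (hM : M.PosDef) :
    Real.log (RCLike.re M.det) ≤ RCLike.re M.trace - Fintype.card n := by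
  set ev := hM.isHermitian.eigenvalues
  have hdet : RCLike.re M.det = ∏ i, ev i := by
    rw [hM.isHermitian.det_eq_prod_eigenvalues, ← RCLike.ofReal_prod, RCLike.ofReal_re]
  have htr : RCLike.re M.trace = ∑ i, ev i := by
    simp only [hM.isHermitian.trace_eq_sum_eigenvalues, map_sum, RCLike.ofReal_re, ev]
  rw [hdet, htr, Real.log_prod fun i _ ↦ (hM.eigenvalues_pos i).ne']
  calc ∑ i, Real.log (ev i) ≤ ∑ i, (ev i - 1) :=
        Finset.sum_le_sum fun i _ ↦ Real.log_le_sub_one_of_pos (hM.eigenvalues_pos i)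
    _ = ∑ i, ev i - Fintype.card n := by simp [Finset.sum_sub_distrib]

open scoped MatrixOrder in
lemma PosDef.log_re_det_le_add_re_trace {A B : Matrix n n 𝕜} (hA : A.PosDef) (hB : B.PosDef) :
    Real.log (RCLike.re B.det) ≤ Real.log (RCLike.re A.det) + RCLike.re (A⁻¹ * (B - A)).trace := by
  set S := CFC.sqrt A
  have hSS : S * S = A := CFC.sqrt_mul_sqrt_self A hA.posSemidef.nonneg
  have hS_herm : Sᴴ = S := (CFC.sqrt_nonneg A).isSelfAdjoint
  have hS_unit : IsUnit S := CFC.isUnit_sqrt_iff_isStrictlyPositive.mpr hA.isStrictlyPositive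
  have hS : IsUnit S.det := (isUnit_iff_isUnit_det S).mp hS_unit
  obtain ⟨M, hM_def⟩ : ∃ M, M = S⁻¹ * B * S⁻¹ := ⟨_, rfl⟩
  have hM : M.PosDef := by
    have := (IsUnit.posDef_star_right_conjugate_iff (isUnit_nonsing_inv_iff.mpr hS_unit)).mpr hB
    rwa [star_eq_conjTranspose, conjTranspose_nonsing_inv, hS_herm, ← hM_def] at this
  have hBM : B = S * M * S := by
    rw [hM_def, ← Matrix.mul_assoc, ← Matrix.mul_assoc, mul_nonsing_inv _ hS, Matrix.one_mul,
      Matrix.mul_assoc, nonsing_inv_mul _ hS, Matrix.mul_one]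
  have hdet : B.det = A.det * M.det := by
    rw [hBM, ← hSS, det_mul, det_mul, det_mul]; ring
  have htr : (A⁻¹ * (B - A)).trace = M.trace - Fintype.card n := by
    rw [Matrix.mul_sub, nonsing_inv_mul _ ((isUnit_iff_isUnit_det A).mp hA.isUnit), trace_sub,
      trace_one, hM_def, ← hSS, Matrix.mul_inv_rev, Matrix.mul_assoc, trace_mul_comm,
      Matrix.mul_assoc]
  have hA_det := RCLike.pos_iff.mp hA.det_pos
  have hre : RCLike.re B.det = RCLike.re A.det * RCLike.re M.det := by
    simp [hdet, RCLike.mul_re, hA_det.2]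
  rw [hre, Real.log_mul hA_det.1.ne' (RCLike.pos_iff.mp hM.det_pos).1.ne', htr]
  simpa using hM.log_re_det_le_re_trace_sub_card

end Matrix

/-- ascent property of the DC algorithm step of Algorithm 1:
the maximizer of the linearized objective does not decrease the secrecy rate. -/
theorem stmt_6 {Nr Ne Nt : ℕ}
    (Hb : Matrix (Fin Nr) (Fin Nt) ℂ) (He : Matrix (Fin Ne) (Fin Nt) ℂ)
    (V Xs : Matrix (Fin Nt) (Fin Nt) ℂ) (hV : V.PosSemidef) (hXs : Xs.PosSemidef)
    (h : Real.log ((1 + Hb * Xs * Hbᴴ).det.re)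
          - ((Heᴴ * (1 + He * V * Heᴴ)⁻¹ * He * Xs).trace).re
        ≥ Real.log ((1 + Hb * V * Hbᴴ).det.re)
          - ((Heᴴ * (1 + He * V * Heᴴ)⁻¹ * He * V).trace).re) :
    Real.log ((1 + Hb * Xs * Hbᴴ).det.re) - Real.log ((1 + He * Xs * Heᴴ).det.re)
      ≥ Real.log ((1 + Hb * V * Hbᴴ).det.re) - Real.log ((1 + He * V * Heᴴ).det.re) := by
  have hA := PosDef.one.add_posSemidef (hV.mul_mul_conjTranspose_same He)
  have hB := PosDef.one.add_posSemidef (hXs.mul_mul_conjTranspose_same He)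
  have key := hA.log_re_det_le_add_re_trace hB
  rw [add_sub_add_left_eq_sub, Matrix.mul_sub, trace_sub, trace_mul_mul_mul_cycle,
    trace_mul_mul_mul_cycle, map_sub] at key
  simp only [RCLike.re_to_complex] at key
  linarith
end

section
/- Let c : ℕ → ℝ be a real sequence and q ∈ ℕ. Define γ(n) := min{ c(n−m) : 0 ≤ m ≤ min(n, q) } for each n ∈ ℕ. If c(n+1) ≥ γ(n) for all n ∈ ℕ, then for every n ≥ 1 it holds that γ(n+q) ≥ γ(n−1); in particular, c(n+m) ≥ γ(n−1) for all n ≥ 1 and 0 ≤ m ≤ q. -/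
/-! `gam c q n` is the minimum of `c` over the window `[n - q, n]` (truncated at `0`). By strong
induction on `k`, every `c k` with `n - q ≤ k ≤ n + q + 1` is at least `gam c q n`: for `k > n`
the hypothesis gives `c k ≥ gam c q (k - 1)`, and the window of `k - 1` lies inside the part of
that range already handled. -/

/-- `gam c q n` is the minimum of `c (n − m)` over `0 ≤ m ≤ min n q`. -/
noncomputable def gam (c : ℕ → ℝ) (q n : ℕ) : ℝ :=
  (Finset.range (min n q + 1)).inf' Finset.nonempty_range_add_one (fun m => c (n - m))

theorem le_gam_iff {c : ℕ → ℝ} {q n : ℕ} {a : ℝ} :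
    a ≤ gam c q n ↔ ∀ k ∈ Finset.Icc (n - q) n, a ≤ c k := by
  simp only [gam, Finset.le_inf'_iff, Finset.mem_range, Finset.mem_Icc]
  constructor
  · intro h k hk
    simpa [Nat.sub_sub_self hk.2] using h (n - k) (by omega)
  · intro h m hm
    exact h (n - m) (by omega)

theorem gam_le_of_mem_Icc {c : ℕ → ℝ} {q n k : ℕ} (hk : k ∈ Finset.Icc (n - q) n) :
    gam c q n ≤ c k :=
  le_gam_iff.1 le_rfl k hk

theorem gam_le_of_le_add {c : ℕ → ℝ} {q : ℕ} (h : ∀ n, c (n + 1) ≥ gam c q n) {n k : ℕ}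
    (hlo : n - q ≤ k) (hhi : k ≤ n + q + 1) : gam c q n ≤ c k := by
  induction k using Nat.strong_induction_on with
  | _ k ih =>
    rcases le_or_gt k n with hkn | hnk
    · exact gam_le_of_mem_Icc (Finset.mem_Icc.2 ⟨hlo, hkn⟩)
    · obtain ⟨j, rfl⟩ : ∃ j, k = j + 1 := ⟨k - 1, by omega⟩
      refine le_trans ?_ (h j)
      refine le_gam_iff.2 fun i hi => ?_
      rw [Finset.mem_Icc] at hi
      exact ih i (by omega) (by omega) (by omega)

/-- the sequence-monotonicity result underlying Lemma 2 of the
paper: if each `c (n+1)` is at least the running minimum `γ n`, then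
`γ (n+q) ≥ γ (n−1)` and `c (n+m) ≥ γ (n−1)` for `0 ≤ m ≤ q`. -/
theorem stmt_7 (c : ℕ → ℝ) (q : ℕ)
    (h : ∀ n, c (n + 1) ≥ gam c q n) :
    ∀ n, 1 ≤ n →
      gam c q (n + q) ≥ gam c q (n - 1) ∧
      ∀ m, m ≤ q → c (n + m) ≥ gam c q (n - 1) := by
  intro n hn
  have hwindow : ∀ k, n ≤ k → k ≤ n + q → gam c q (n - 1) ≤ c k :=
    fun k hlo hhi => gam_le_of_le_add h (by omega) (by omega)
  refine ⟨le_gam_iff.2 fun k hk => ?_, fun m hm => hwindow (n + m) (by omega) (by omega)⟩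
  rw [Finset.mem_Icc] at hk
  exact hwindow k (by omega) hk.2
end

section
/- Let Ψ₁₂ ∈ ℂ^{N_r×N_e}, let U ∈ ℂ^{N_r×N_r} be unitary, and let σ₁, …, σ_{N_r} ≥ 0 be real numbers such that Ψ₁₂Ψ₁₂ᴴ = U diag(σ₁, …, σ_{N_r}) Uᴴ. Define Ξ := diag(2/(1+√(1+4σ₁)), …, 2/(1+√(1+4σ_{N_r}))) and K̄ := −U Ξ Uᴴ Ψ₁₂. Then I − K̄K̄ᴴ is Hermitian positive definite and (I − K̄K̄ᴴ)^{-1} K̄ = −Ψ₁₂. -/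
open Matrix
open scoped ComplexOrder

/-!
`ξ = 2 / (1 + √(1 + 4σ))` is the positive root of `σ ξ² + ξ = 1`, so the diagonal matrix `Ξ`
satisfies `Ξ D Ξ = 1 - Ξ` with `D = diag σ`. Conjugating by `U` turns this into `A (ΨΨᴴ) A = 1 - A`
for the positive definite matrix `A = U Ξ Uᴴ`, and since `K = -AΨ` this says exactly
`1 - KKᴴ = A`. Hence `(1 - KKᴴ)⁻¹ K = A⁻¹ (-AΨ) = -Ψ`.
-/

lemma mul_mul_self_eq_one_sub_of_eq_two_div {σ ξ : ℝ} (hσ : -(1 / 4) ≤ σ)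
    (hξ : ξ = 2 / (1 + √(1 + 4 * σ))) : ξ * σ * ξ = 1 - ξ := by
  have hsq : √(1 + 4 * σ) ^ 2 = 1 + 4 * σ := Real.sq_sqrt (by linarith)
  have hpos : 0 < 1 + √(1 + 4 * σ) := by positivity
  rw [hξ]
  generalize √(1 + 4 * σ) = s at hsq hpos
  field_simp
  linear_combination -hsq

lemma one_sub_mul_conjTranspose_eq_of_eq_neg_mul {m n R : Type*} [Fintype m] [Fintype n]
    [DecidableEq m] [CommRing R] [StarRing R] {A : Matrix m m R} {Ψ K : Matrix m n R}
    (hA : A.IsHermitian) (h : A * (Ψ * Ψᴴ) * A = 1 - A) (hK : K = -(A * Ψ)) : 1 - K * Kᴴ = A := by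
  rw [hK, conjTranspose_neg, Matrix.neg_mul, Matrix.mul_neg, neg_neg, conjTranspose_mul, hA.eq]
  simp only [Matrix.mul_assoc] at h ⊢
  rw [h, sub_sub_cancel]

/-- stationarity (KKT) verification in the proof of Lemma 3 of
the paper: the closed-form matrix `K̄` is strictly feasible and satisfies
`(I − K̄K̄ᴴ)⁻¹ K̄ = −Ψ₁₂`. -/
theorem stmt_12 {Nr Ne : ℕ}
    (Ψ : Matrix (Fin Nr) (Fin Ne) ℂ)
    (U : Matrix (Fin Nr) (Fin Nr) ℂ) (hU : Uᴴ * U = 1)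
    (σ : Fin Nr → ℝ) (hσ : ∀ i, 0 ≤ σ i)
    (hdecomp : Ψ * Ψᴴ = U * Matrix.diagonal (fun i => ((σ i : ℝ) : ℂ)) * Uᴴ)
    (Ξ : Matrix (Fin Nr) (Fin Nr) ℂ)
    (hΞ : Ξ = Matrix.diagonal (fun i => ((2 / (1 + Real.sqrt (1 + 4 * σ i)) : ℝ) : ℂ)))
    (K : Matrix (Fin Nr) (Fin Ne) ℂ)
    (hK : K = -(U * Ξ * Uᴴ * Ψ)) :
    (1 - K * Kᴴ).PosDef ∧ (1 - K * Kᴴ)⁻¹ * K = -Ψ := by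
  have hΞ_pd : Ξ.PosDef := by
    rw [hΞ, posDef_diagonal_iff]
    exact fun i => Complex.zero_lt_real.mpr (by positivity)
  have hΞ_root : Ξ * diagonal (fun i => (σ i : ℂ)) * Ξ = 1 - Ξ := by
    rw [hΞ, diagonal_mul_diagonal, diagonal_mul_diagonal, ← diagonal_one, diagonal_sub]
    congr 1
    funext i
    exact_mod_cast mul_mul_self_eq_one_sub_of_eq_two_div (σ := σ i) (by linarith [hσ i]) rfl
  let u : unitaryGroup (Fin Nr) ℂ := ⟨U, mem_unitaryGroup_iff'.mpr hU⟩
  set A := U * Ξ * Uᴴ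
  have hA_pd : A.PosDef :=
    (Unitary.isUnit_coe (U := u)).posDef_star_right_conjugate_iff.mpr hΞ_pd
  have hA_root : A * (Ψ * Ψᴴ) * A = 1 - A := by
    have := congrArg (Unitary.conjStarAlgAut ℂ _ u) hΞ_root
    rw [map_mul, map_mul, map_sub, map_one] at this
    rwa [hdecomp]
  have hA_det : IsUnit A.det := (isUnit_iff_isUnit_det A).mp hA_pd.isUnit
  rw [one_sub_mul_conjTranspose_eq_of_eq_neg_mul hA_pd.isHermitian hA_root hK, hK,
    Matrix.mul_neg, ← Matrix.mul_assoc, nonsing_inv_mul _ hA_det, Matrix.one_mul]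
  exact ⟨hA_pd, rfl⟩
end

section
/- Let Ψ₁₂ ∈ ℂ^{N_r×N_e}, let U ∈ ℂ^{N_r×N_r} be unitary, and let σ₁, …, σ_{N_r} ≥ 0 be real numbers such that Ψ₁₂Ψ₁₂ᴴ = U diag(σ₁, …, σ_{N_r}) Uᴴ. Define Ξ := diag(2/(1+√(1+4σ₁)), …, 2/(1+√(1+4σ_{N_r}))) and K̄ := −U Ξ Uᴴ Ψ₁₂, and for any M ∈ ℂ^{N_r×N_e} with I − MMᴴ Hermitian positive definite define h(M) := 2 Re tr(Ψ₁₂ Mᴴ) − ln det(I − MMᴴ) (the determinant is a positive real). Then I − K̄K̄ᴴ is Hermitian positive definite and h(K̄) ≤ h(M) for every M ∈ ℂ^{N_r×N_e} with I − MMᴴ Hermitian positive definite. -/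
/-!
For `P := (1 - K Kᴴ)⁻¹`, the stationarity condition `K = -(1 - K Kᴴ) Ψ` of the convex function `h`
gives `h M - h K ≥ tr (P (M - K)(M - K)ᴴ) ≥ 0`: the log-determinant is handled by
`log det X ≤ tr X - n` for `X = R (1 - M Mᴴ) Rᴴ` with `P = Rᴴ R`, and `tr P - n = tr (P K Kᴴ)`.
The closed form `K̄` is stationary because in the eigenbasis `U` of `Ψ Ψᴴ` each entry
`ξ = 2 / (1 + √(1 + 4σ))` solves `ξ + σ ξ² = 1`, so that `1 - K̄ K̄ᴴ = U Ξ Uᴴ`.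
-/

open Matrix
open scoped ComplexOrder MatrixOrder

namespace Matrix

variable {n m : Type*} [Fintype n] [Fintype m]

lemma re_trace_mul_mul_conjTranspose_comm {P : Matrix n n ℂ} (hP : P.IsHermitian)
    (X Y : Matrix n m ℂ) : (P * X * Yᴴ).trace.re = (P * Y * Xᴴ).trace.re := by
  rw [← Complex.conj_re, ← Complex.star_def, ← trace_conjTranspose]
  simp only [conjTranspose_mul, conjTranspose_conjTranspose, hP.eq]
  rw [trace_mul_cycle', Matrix.mul_assoc]

lemma PosSemidef.re_trace_mul_mul_conjTranspose_nonneg {P : Matrix n n ℂ} (hP : P.PosSemidef)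
    (X : Matrix n m ℂ) : 0 ≤ (P * X * Xᴴ).trace.re := by
  have h := (hP.conjTranspose_mul_mul_same X).trace_nonneg
  rw [trace_mul_cycle, trace_mul_comm, ← Matrix.mul_assoc] at h
  exact (Complex.le_def.mp h).1

variable [DecidableEq n]

lemma PosDef.ofReal_det_re {A : Matrix n n ℂ} (hA : A.PosDef) : ((A.det.re : ℝ) : ℂ) = A.det :=
  (Complex.eq_re_of_ofReal_le (r := 0) (by simpa using hA.det_pos.le)).symm

lemma PosDef.det_re_pos {A : Matrix n n ℂ} (hA : A.PosDef) : 0 < A.det.re :=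
  (Complex.pos_iff.mp hA.det_pos).1

lemma PosDef.log_det_re_le_trace_re_sub_card {C : Matrix n n ℂ} (hC : C.PosDef) :
    Real.log C.det.re ≤ C.trace.re - Fintype.card n := by
  have hev := hC.eigenvalues_pos
  rw [hC.isHermitian.det_eq_prod_eigenvalues, hC.isHermitian.trace_eq_sum_eigenvalues]
  simp only [Complex.coe_algebraMap, ← Complex.ofReal_prod, ← Complex.ofReal_sum,
    Complex.ofReal_re]
  rw [Real.log_prod fun i _ => (hev i).ne']
  calc ∑ i, Real.log (hC.isHermitian.eigenvalues i)
      ≤ ∑ i, (hC.isHermitian.eigenvalues i - 1) :=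
        Finset.sum_le_sum fun i _ => Real.log_le_sub_one_of_pos (hev i)
    _ = _ := by simp [Finset.sum_sub_distrib]

lemma PosDef.log_det_re_add_log_det_re_le {P B : Matrix n n ℂ} (hP : P.PosDef) (hB : B.PosDef) :
    Real.log P.det.re + Real.log B.det.re ≤ (P * B).trace.re - Fintype.card n := by
  obtain ⟨R, rfl⟩ := CStarAlgebra.nonneg_iff_eq_star_mul_self.mp hP.posSemidef.nonneg
  have hR : IsUnit R := by
    have := (isUnit_iff_isUnit_det _).mp hP.isUnit
    rw [det_mul] at this
    exact (isUnit_iff_isUnit_det _).mpr (isUnit_of_mul_isUnit_right this)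
  have hC := hB.mul_mul_conjTranspose_same (vecMul_injective_iff_isUnit.mpr hR)
  have hdet : (R * B * Rᴴ).det.re = (star R * R).det.re * B.det.re := by
    rw [← Complex.ofReal_re ((star R * R).det.re * B.det.re), Complex.ofReal_mul,
      hP.ofReal_det_re, hB.ofReal_det_re]
    simp only [det_mul, star_eq_conjTranspose]; ring_nf
  have htr : (R * B * Rᴴ).trace = (star R * R * B).trace := by
    rw [trace_mul_cycle, star_eq_conjTranspose, Matrix.mul_assoc]
  rw [← Real.log_mul hP.det_re_pos.ne' hB.det_re_pos.ne', ← hdet, ← htr]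
  exact hC.log_det_re_le_trace_re_sub_card

noncomputable def logDetObjective (Ψ M : Matrix n m ℂ) : ℝ :=
  2 * (Ψ * Mᴴ).trace.re - Real.log (1 - M * Mᴴ).det.re

theorem logDetObjective_le_of_stationary {Ψ K M : Matrix n m ℂ} (hK : (1 - K * Kᴴ).PosDef)
    (hstat : K = -((1 - K * Kᴴ) * Ψ)) (hM : (1 - M * Mᴴ).PosDef) :
    logDetObjective Ψ K ≤ logDetObjective Ψ M := by
  set Q := 1 - K * Kᴴ with hQ
  set P := Q⁻¹
  have hPQ : P * Q = 1 := nonsing_inv_mul Q ((isUnit_iff_isUnit_det Q).mp hK.isUnit)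
  have hPK : P * K = -Ψ := by
    conv_lhs => rw [hstat]
    rw [Matrix.mul_neg, ← Matrix.mul_assoc, hPQ, Matrix.one_mul]
  have hPKK : P * K * Kᴴ = P - 1 := by
    rw [← hPQ, hQ, Matrix.mul_sub, Matrix.mul_one, Matrix.mul_assoc]
    abel
  have hlogP : Real.log P.det.re = -Real.log Q.det.re := by
    have h : P.det.re * Q.det.re = 1 := by
      rw [← Complex.ofReal_re (_ * _), Complex.ofReal_mul, hK.inv.ofReal_det_re, hK.ofReal_det_re,
        ← det_mul, hPQ, det_one, Complex.one_re]
    rw [eq_neg_iff_add_eq_zero, ← Real.log_mul hK.inv.det_re_pos.ne' hK.det_re_pos.ne', h,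
      Real.log_one]
  have hlogdet := hK.inv.log_det_re_add_log_det_re_le hM
  have htrace : (P * (1 - M * Mᴴ)).trace.re - Fintype.card n
      = -(Ψ * Kᴴ).trace.re - (P * M * Mᴴ).trace.re := by
    have : P * (1 - M * Mᴴ) - 1 = P * K * Kᴴ - P * M * Mᴴ := by
      rw [hPKK, Matrix.mul_sub, Matrix.mul_one, Matrix.mul_assoc]; abel
    rw [← Complex.natCast_re, ← trace_one, ← Complex.sub_re, ← trace_sub, this, trace_sub,
      hPK, Matrix.neg_mul, trace_neg, Complex.sub_re, Complex.neg_re]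
  have hquad := hK.inv.posSemidef.re_trace_mul_mul_conjTranspose_nonneg (M - K)
  have hexpand : (P * (M - K) * (M - K)ᴴ).trace.re = (P * M * Mᴴ).trace.re
      + 2 * (Ψ * Mᴴ).trace.re - (Ψ * Kᴴ).trace.re := by
    have hcross := re_trace_mul_mul_conjTranspose_comm hK.inv.isHermitian M K
    have hsplit : P * (M - K) * (M - K)ᴴ = P * M * Mᴴ - P * M * Kᴴ - P * K * Mᴴ + P * K * Kᴴ := by
      simp only [conjTranspose_sub, Matrix.mul_sub, Matrix.sub_mul]; abel
    rw [hsplit, trace_add, trace_sub, trace_sub, Complex.add_re, Complex.sub_re, Complex.sub_re,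
      hcross, hPK, Matrix.neg_mul, Matrix.neg_mul, trace_neg, trace_neg, Complex.neg_re,
      Complex.neg_re]
    ring
  unfold logDetObjective
  linarith

theorem one_sub_conj_mul_mul_conjTranspose {U : Matrix n n ℂ} (hU : Uᴴ * U = 1)
    {Ψ : Matrix n m ℂ} {D Ξ : Matrix n n ℂ} (hΨ : Ψ * Ψᴴ = U * D * Uᴴ) (hΞ : Ξᴴ = Ξ)
    (hΞD : Ξ + Ξ * D * Ξ = 1) :
    1 - U * Ξ * Uᴴ * Ψ * (U * Ξ * Uᴴ * Ψ)ᴴ = U * Ξ * Uᴴ := by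
  have hΨ' (Z : Matrix n n ℂ) : Ψ * (Ψᴴ * Z) = U * (D * (Uᴴ * Z)) := by
    rw [← Matrix.mul_assoc, hΨ]; simp only [Matrix.mul_assoc]
  have hU' (Z : Matrix n n ℂ) : Uᴴ * (U * Z) = Z := by rw [← Matrix.mul_assoc, hU, Matrix.one_mul]
  calc 1 - U * Ξ * Uᴴ * Ψ * (U * Ξ * Uᴴ * Ψ)ᴴ = U * (1 - Ξ * D * Ξ) * Uᴴ := by
        rw [Matrix.mul_sub, Matrix.sub_mul, Matrix.mul_one, mul_eq_one_comm.mp hU]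
        simp only [conjTranspose_mul, conjTranspose_conjTranspose, hΞ, Matrix.mul_assoc, hΨ', hU']
    _ = U * Ξ * Uᴴ := by rw [← hΞD, add_sub_cancel_right]

end Matrix

lemma two_div_one_add_sqrt_add_mul_mul_self {s : ℝ} (hs : 0 ≤ s) :
    2 / (1 + √(1 + 4 * s)) + 2 / (1 + √(1 + 4 * s)) * s * (2 / (1 + √(1 + 4 * s))) = 1 := by
  have hsq := Real.sq_sqrt (by linarith : (0 : ℝ) ≤ 1 + 4 * s)
  have hpos : 0 < 1 + √(1 + 4 * s) := by positivity
  field_simp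
  nlinarith

/-- Lemma 3 of the paper: the closed-form `K̄` is the global
minimizer of `h(M) = 2 Re tr(Ψ₁₂ Mᴴ) − ln det(I − MMᴴ)` over the strictly
feasible set `{M : I − MMᴴ ≻ 0}`. -/
theorem stmt_13 {Nr Ne : ℕ}
    (Ψ : Matrix (Fin Nr) (Fin Ne) ℂ)
    (U : Matrix (Fin Nr) (Fin Nr) ℂ) (hU : Uᴴ * U = 1)
    (σ : Fin Nr → ℝ) (hσ : ∀ i, 0 ≤ σ i)
    (hdecomp : Ψ * Ψᴴ = U * Matrix.diagonal (fun i => ((σ i : ℝ) : ℂ)) * Uᴴ)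
    (Ξ : Matrix (Fin Nr) (Fin Nr) ℂ)
    (hΞ : Ξ = Matrix.diagonal (fun i => ((2 / (1 + Real.sqrt (1 + 4 * σ i)) : ℝ) : ℂ)))
    (K : Matrix (Fin Nr) (Fin Ne) ℂ)
    (hK : K = -(U * Ξ * Uᴴ * Ψ)) :
    (1 - K * Kᴴ).PosDef ∧
    ∀ M : Matrix (Fin Nr) (Fin Ne) ℂ, (1 - M * Mᴴ).PosDef →
      2 * ((Ψ * Kᴴ).trace).re - Real.log ((1 - K * Kᴴ).det.re)
        ≤ 2 * ((Ψ * Mᴴ).trace).re - Real.log ((1 - M * Mᴴ).det.re) := by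
  have hΞH : Ξᴴ = Ξ := by simp [hΞ, diagonal_conjTranspose, Pi.star_def]
  have hΞσ : Ξ + Ξ * diagonal (fun i => (σ i : ℂ)) * Ξ = 1 := by
    rw [hΞ, diagonal_mul_diagonal, diagonal_mul_diagonal, diagonal_add, ← diagonal_one]
    congr 1; funext i
    exact_mod_cast two_div_one_add_sqrt_add_mul_mul_self (hσ i)
  have hQ : 1 - K * Kᴴ = U * Ξ * Uᴴ := by
    rw [hK, conjTranspose_neg, Matrix.neg_mul, Matrix.mul_neg, neg_neg]
    exact one_sub_conj_mul_mul_conjTranspose hU hdecomp hΞH hΞσ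
  have hUunit : IsUnit U := (isUnit_iff_isUnit_det U).mpr (isUnit_det_of_left_inverse hU)
  have hΞpd : Ξ.PosDef := hΞ ▸ PosDef.diagonal fun i => Complex.zero_lt_real.mpr (by positivity)
  have hKpd : (1 - K * Kᴴ).PosDef :=
    hQ ▸ hΞpd.mul_mul_conjTranspose_same (vecMul_injective_iff_isUnit.mpr hUunit)
  refine ⟨hKpd, fun M hM => logDetObjective_le_of_stationary hKpd ?_ hM⟩
  rwa [hQ]
end
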